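/- arXiv:2302.01583 — 2 statements merged into one kernel-verified Lean document; each statement's English description precedes it below -/
import Mathlib

section
/- Let X be a locally path connected and semilocally simply connected topological space. Then the quotient map q : P(X) → Π₁(X), sending a path to its path-homotopy class, is an open map (where P(X) carries the compact-open topology and Π₁(X) the quotient topology). -/
open unitInterval

noncomputable section

variable {X : Type*} [TopologicalSpace X]

/-- The path-homotopy (homotopy relative to `{0,1}`) relation on `C(I, X)`. -/
def pRel (f g : C(I, X)) : Prop := f.HomotopicRel g {0, 1}

/-- The path-homotopy setoid on `C(I, X)`. -/
def pSetoid (X : Type*) [TopologicalSpace X] : Setoid C(I, X) :=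
  ⟨pRel, ContinuousMap.HomotopicRel.equivalence⟩

/-- The fundamental groupoid `Π₁(X)` as the quotient of the path space `P(X) = C(I, X)`
(with the compact-open topology) by path homotopy; it carries the quotient (CO') topology. -/
abbrev Pi1 (X : Type*) [TopologicalSpace X] := Quotient (pSetoid X)

/-- The quotient map `q : P(X) → Π₁(X)`. -/
def pq : C(I, X) → Pi1 X := Quotient.mk (pSetoid X)

theorem pRel.endpts {f g : C(I, X)} (h : pRel f g) {t : I} (ht : t ∈ ({0, 1} : Set I)) :
    f t = g t := h.some.fst_eq_snd ht

/-- The source map `s : Π₁(X) → X`, `[γ] ↦ γ(0)`. -/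
def srcMap : Pi1 X → X :=
  Quotient.lift (fun f : C(I, X) => f 0) fun _ _ h =>
    pRel.endpts h (by simp)

/-- The range map `r : Π₁(X) → X`, `[γ] ↦ γ(1)`. -/
def rngMap : Pi1 X → X :=
  Quotient.lift (fun f : C(I, X) => f 1) fun _ _ h =>
    pRel.endpts h (by simp)

/-- A continuous map `I → X` regarded as a `Path` between its endpoints. -/
def toPath (f : C(I, X)) : Path (f 0) (f 1) := ⟨f, rfl, rfl⟩

/-- Concatenation `α ⧠ β` of paths: traverse `β` first and then `α`
(given `β 1 = α 0`). -/
def concat (α β : C(I, X)) (h : β 1 = α 0) : C(I, X) :=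
  ((toPath β).trans ((toPath α).cast h rfl)).toContinuousMap

@[simp] theorem concat_zero (α β : C(I, X)) (h : β 1 = α 0) : concat α β h 0 = β 0 :=
  ((toPath β).trans ((toPath α).cast h rfl)).source

@[simp] theorem concat_one (α β : C(I, X)) (h : β 1 = α 0) : concat α β h 1 = α 1 :=
  ((toPath β).trans ((toPath α).cast h rfl)).target

/-- The set `N([γ], U, V) = {[δ ⧠ γ ⧠ θ] : δ a path in U with δ 0 = γ 1,
θ a path in V with θ 1 = γ 0}` in `Π₁(X)`. -/
def Nhd (a : Pi1 X) (U V : Set X) : Set (Pi1 X) :=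
  { b | ∃ (γ δ θ : C(I, X)) (h₁ : θ 1 = γ 0) (h₂ : γ 1 = δ 0),
      pq γ = a ∧ Set.range δ ⊆ U ∧ Set.range θ ⊆ V ∧
      b = pq (concat δ (concat γ θ h₁) ((concat_one γ θ h₁).trans h₂)) }

/-- A subset `U ⊆ X` is relatively inessential in `X` if every loop in `U` is
null-homotopic (path-homotopic to a constant path) in `X`. -/
def RelInessential (X : Type*) [TopologicalSpace X] (U : Set X) : Prop :=
  ∀ γ : C(I, X), Set.range γ ⊆ U → γ 1 = γ 0 →
    pRel γ (ContinuousMap.const I (γ 0))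

/-- `X` is semilocally simply connected if every point has a relatively inessential
open neighbourhood. -/
def SemilocSimplyConnected (X : Type*) [TopologicalSpace X] : Prop :=
  ∀ x : X, ∃ U : Set X, IsOpen U ∧ x ∈ U ∧ RelInessential X U

/-!
Let `g ∈ W` be path-homotopic to `f`. Subdivide `I` by `0 = t₀ ≤ ⋯ ≤ t_N = 1` so that `f` maps
`[tₙ, tₙ₊₁]` into a relatively inessential open set `Pₙ`. A path `h` close to `f` in the
compact-open topology maps `[tₙ, tₙ₊₁]` into `Pₙ` as well, and by local path connectedness
`h tₙ` is joined to `f tₙ` by a path `ℓₙ` inside `Pₙ₋₁ ∩ Pₙ`. The paths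
`f|[tₙ, tₙ₊₁] ⬝ ℓₙ₊₁` and `ℓₙ ⬝ h|[tₙ, tₙ₊₁]` both lie in `Pₙ`, so they are homotopic;
telescoping gives `h ≃ ℓ₀⁻¹ ⬝ f ⬝ ℓ_N ≃ ℓ₀⁻¹ ⬝ g ⬝ ℓ_N`, with end paths in any prescribed
neighbourhoods of the endpoints.

Conversely, the piece of `θ ⬝ g ⬝ δ` over `[(1 - u) / 4, (1 + u) / 2]` depends continuously on
`(u, θ, δ)` and is `g` itself for `u = 0`, so it lies in `W` for small `u > 0` and `θ`, `δ`
close to constant paths. If `θ` and `δ` are first squeezed into the parts of `I` that this piece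
sees, the piece is homotopic to `θ ⬝ g ⬝ δ`.
-/

open Set Topology Filter

section Telescoping

variable {x y x' y' : X}

open Path.Homotopic.Quotient in
theorem RelInessential.homotopic {U : Set X} (hU : RelInessential X U) {p q : Path x y}
    (hp : range p ⊆ U) (hq : range q ⊆ U) : p.Homotopic q := by
  have hloop := hU (p.trans q.symm).toContinuousMap
    (by simpa [Path.trans_range] using ⟨hp, hq⟩) (by simp)
  have hstart : (p.trans q.symm).toContinuousMap 0 = x := by simp
  rw [hstart] at hloop
  replace hloop : mk (p.trans q.symm) = mk (Path.refl x) := eq.2 hloop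
  rw [← eq]
  calc mk p = (mk (p.trans q.symm)).trans (mk q) := by simp
    _ = mk q := by simp [hloop]

open Path.Homotopic.Quotient in
theorem exists_subpath_trans_homotopic {F : Path x y} {H : Path x' y'} {t : ℕ → I}
    {P Q : ℕ → Set X} (n : ℕ)
    (hP : ∀ k < n, RelInessential X (P k))
    (hF : ∀ k < n, range (F.subpath (t k) (t (k + 1))) ⊆ P k)
    (hH : ∀ k < n, range (H.subpath (t k) (t (k + 1))) ⊆ P k)
    (hQ : ∀ k < n, Q k ∪ Q (k + 1) ⊆ P k)
    (hJ : ∀ k ≤ n, JoinedIn (Q k) (F (t k)) (H (t k))) :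
    ∃ (ℓ₀ : Path (F (t 0)) (H (t 0))) (ℓ : Path (F (t n)) (H (t n))),
      range ℓ₀ ⊆ Q 0 ∧ range ℓ ⊆ Q n ∧
      ((F.subpath (t 0) (t n)).trans ℓ).Homotopic (ℓ₀.trans (H.subpath (t 0) (t n))) := by
  induction n with
  | zero =>
    have hℓ₀ : range (hJ 0 le_rfl).somePath ⊆ Q 0 := range_subset_iff.2 (hJ 0 le_rfl).somePath_mem
    refine ⟨_, _, hℓ₀, hℓ₀, ?_⟩
    simpa using (Path.Homotopic.refl_trans _).trans (Path.Homotopic.trans_refl _).symm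
  | succ n ih =>
    obtain ⟨ℓ₀, ℓ, hℓ₀, hℓ, hsq⟩ := ih (fun k hk => hP k (by omega)) (fun k hk => hF k (by omega))
      (fun k hk => hH k (by omega)) (fun k hk => hQ k (by omega)) (fun k hk => hJ k (by omega))
    let ℓ' := (hJ (n + 1) le_rfl).somePath
    have hℓ' : range ℓ' ⊆ Q (n + 1) := range_subset_iff.2 (hJ (n + 1) le_rfl).somePath_mem
    have hQn := hQ n (by omega)
    have hsq' : ((F.subpath (t n) (t (n + 1))).trans ℓ').Homotopic
        (ℓ.trans (H.subpath (t n) (t (n + 1)))) :=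
      (hP n (by omega)).homotopic
        (by
          rw [Path.trans_range]
          exact union_subset (hF n (by omega)) (hℓ'.trans (subset_union_right.trans hQn)))
        (by
          rw [Path.trans_range]
          exact union_subset (hℓ.trans (subset_union_left.trans hQn)) (hH n (by omega)))
    refine ⟨ℓ₀, ℓ', hℓ₀, hℓ', ?_⟩
    have hF' := eq.2 ⟨Path.Homotopy.subpathTransSubpath F (t 0) (t n) (t (n + 1))⟩
    have hH' := eq.2 ⟨Path.Homotopy.subpathTransSubpath H (t 0) (t n) (t (n + 1))⟩
    rw [← eq] at hsq hsq' ⊢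
    simp only [mk_trans] at hsq hsq' hF' hH' ⊢
    rw [← hF', ← hH', trans_assoc, hsq', ← trans_assoc, hsq, trans_assoc]

open Path.Homotopic.Quotient in
theorem exists_homotopic_trans_trans_of_square {F : Path x y} {H : Path x' y'} {s₀ s₁ : I}
    (h₀ : s₀ = 0) (h₁ : s₁ = 1) {ℓ₀ : Path (F s₀) (H s₀)} {ℓ₁ : Path (F s₁) (H s₁)}
    (hsq : ((F.subpath s₀ s₁).trans ℓ₁).Homotopic (ℓ₀.trans (H.subpath s₀ s₁))) :
    ∃ (θ : Path x' x) (δ : Path y y'), range θ = range ℓ₀ ∧ range δ = range ℓ₁ ∧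
      H.Homotopic ((θ.trans F).trans δ) := by
  subst h₀ h₁
  refine ⟨ℓ₀.symm.cast H.source.symm F.source.symm, ℓ₁.cast F.target.symm H.target.symm,
    by simp, by simp, ?_⟩
  simp only [Path.subpath_zero_one] at hsq
  refine Path.Homotopic.pathCast (p := H.cast H.source H.target)
    (q := (ℓ₀.symm.trans (F.cast F.source F.target)).trans ℓ₁) ?_ H.source.symm H.target.symm
  rw [← eq] at hsq ⊢
  simp only [mk_trans, mk_symm, trans_assoc] at hsq ⊢
  rw [hsq, ← trans_assoc]
  simp

theorem eventually_homotopic_trans_trans_of_subdivision [LocallyPathConnectedSpace X]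
    {F : Path x y} {t : ℕ → I} {N : ℕ} (ht₀ : t 0 = 0) (htN : t N = 1) (ht_mono : Monotone t)
    {P Q : ℕ → Set X} (hP_open : ∀ n, IsOpen (P n)) (hP : ∀ n, RelInessential X (P n))
    (hFP : ∀ n, MapsTo F (Icc (t n) (t (n + 1))) (P n)) (hQ_open : ∀ n, IsOpen (Q n))
    (hQP : ∀ n, Q n ∪ Q (n + 1) ⊆ P n) (hFQ : ∀ n, F (t n) ∈ Q n) :
    ∀ᶠ h : C(I, X) in 𝓝 F.toContinuousMap, ∃ (θ : Path (h 0) x) (δ : Path y (h 1)),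
      range θ ⊆ Q 0 ∧ range δ ⊆ Q N ∧ (toPath h).Homotopic ((θ.trans F).trans δ) := by
  have hmaps : ∀ᶠ h : C(I, X) in 𝓝 F.toContinuousMap, ∀ n ∈ {n | n < N},
      MapsTo h (Icc (t n) (t (n + 1))) (P n) :=
    (eventually_all_finite (finite_lt_nat N)).2 fun n _ =>
      ContinuousMap.eventually_mapsTo isCompact_Icc (hP_open n) (hFP n)
  have hnodes : ∀ᶠ h : C(I, X) in 𝓝 F.toContinuousMap, ∀ n ∈ {n | n ≤ N},
      h (t n) ∈ pathComponentIn (Q n) (F (t n)) :=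
    (eventually_all_finite (finite_le_nat N)).2 fun n _ =>
      (continuous_eval_const (t n)).continuousAt.eventually_mem
        (((hQ_open n).pathComponentIn _).mem_nhds (mem_pathComponentIn_self (hFQ n)))
  filter_upwards [hmaps, hnodes] with h hmaps hnodes
  obtain ⟨ℓ₀, ℓ, hℓ₀, hℓ, hsq⟩ := exists_subpath_trans_homotopic (H := toPath h) N
    (fun k _ => hP k)
    (fun k _ => by
      rw [Path.range_subpath_of_le _ _ _ (ht_mono k.le_succ)]; exact (hFP k).image_subset)
    (fun k hk => by
      rw [Path.range_subpath_of_le _ _ _ (ht_mono k.le_succ)]; exact (hmaps k hk).image_subset)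
    (fun k _ => hQP k) hnodes
  obtain ⟨θ, δ, hθ, hδ, hH⟩ := exists_homotopic_trans_trans_of_square ht₀ htN hsq
  exact ⟨θ, δ, hθ ▸ hℓ₀, hδ ▸ hℓ, hH⟩

theorem eventually_homotopic_trans_trans [LocallyPathConnectedSpace X]
    (hX : SemilocSimplyConnected X) (F : Path x y) {A B : Set X} (hA : A ∈ 𝓝 x)
    (hB : B ∈ 𝓝 y) :
    ∀ᶠ h : C(I, X) in 𝓝 F.toContinuousMap, ∃ (θ : Path (h 0) x) (δ : Path y (h 1)),
      range θ ⊆ A ∧ range δ ⊆ B ∧ (toPath h).Homotopic ((θ.trans F).trans δ) := by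
  choose O hO_open hO_mem hO using hX
  obtain ⟨t, ht₀, ht_mono, ⟨N, hN⟩, hcover⟩ :=
    exists_monotone_Icc_subset_open_cover_unitInterval (c := fun s => F ⁻¹' O (F s))
      (fun s => (hO_open _).preimage F.continuous) (fun s _ => mem_iUnion.2 ⟨s, hO_mem (F s)⟩)
  have htN : t N = 1 := hN N le_rfl
  choose i hFP using hcover
  have ht_mem : ∀ n, t n ∈ Icc (t n) (t (n + 1)) := fun n => ⟨le_rfl, ht_mono n.le_succ⟩
  have ht_mem' : ∀ n, t (n + 1) ∈ Icc (t n) (t (n + 1)) := fun n => ⟨ht_mono n.le_succ, le_rfl⟩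
  let P : ℕ → Set X := fun n => O (F (i n))
  let Q : ℕ → Set X := fun n => P (n - 1) ∩ P n ∩ (if n = 0 then interior A else univ) ∩
    (if n = N then interior B else univ)
  have hQ_open : ∀ n, IsOpen (Q n) := fun n => by
    refine (((hO_open _).inter (hO_open _)).inter ?_).inter ?_ <;>
      split_ifs <;> first | exact isOpen_interior | exact isOpen_univ
  have hFQ : ∀ n, F (t n) ∈ Q n := by
    intro n
    refine ⟨⟨⟨?_, hFP n (ht_mem n)⟩, ?_⟩, ?_⟩
    · cases n with
      | zero => exact hFP 0 (ht_mem 0)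
      | succ k => exact hFP k (ht_mem' k)
    · split_ifs with hn
      · rw [hn, ht₀, F.source]; exact mem_interior_iff_mem_nhds.2 hA
      · trivial
    · split_ifs with hn
      · rw [hn, htN, F.target]; exact mem_interior_iff_mem_nhds.2 hB
      · trivial
  filter_upwards [eventually_homotopic_trans_trans_of_subdivision (P := P) ht₀ htN ht_mono
    (fun n => hO_open _) (fun n => hO _) hFP hQ_open
    (fun n => union_subset (fun z hz => hz.1.1.2) (fun z hz => by simpa using hz.1.1.1)) hFQ]
    with h ⟨θ, δ, hθ, hδ, hh⟩
  refine ⟨θ, δ, hθ.trans fun z hz => ?_, hδ.trans fun z hz => ?_, hh⟩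
  · exact interior_subset (by simpa [Q] using hz.1.2)
  · exact interior_subset (by simpa [Q] using hz.2)

end Telescoping

section Reparam

variable {x y : X}

def unitInterval.ramp (a b : ℝ) (v : I) : I := projIcc 0 1 zero_le_one ((v - a) / (b - a))

theorem unitInterval.continuous_ramp (a b : ℝ) : Continuous (ramp a b) :=
  continuous_projIcc.comp (by fun_prop)

theorem unitInterval.ramp_of_le {a b : ℝ} (hab : a < b) {v : I} (hv : (v : ℝ) ≤ a) :
    ramp a b v = 0 :=
  projIcc_of_le_left _ (div_nonpos_of_nonpos_of_nonneg (by linarith) (by linarith))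

theorem unitInterval.ramp_of_ge {a b : ℝ} (hab : a < b) {v : I} (hv : b ≤ v) :
    ramp a b v = 1 :=
  projIcc_of_right_le _ ((one_le_div (by linarith)).2 (by linarith))

theorem unitInterval.coe_ramp_of_mem {a b : ℝ} (hab : a < b) {v : I} (hv : (v : ℝ) ∈ Icc a b) :
    a + (b - a) * ramp a b v = v := by
  rw [ramp, projIcc_of_mem]
  · show a + (b - a) * ((v - a) / (b - a)) = v
    rw [mul_div_cancel₀ _ (sub_ne_zero.2 hab.ne')]; ring
  · exact ⟨div_nonneg (by linarith [hv.1]) (by linarith),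
      (div_le_one (by linarith)).2 (by linarith [hv.2])⟩

/-- `γ` run at full speed on `[a, b]` and at rest outside it. -/
def Path.squeeze (γ : Path x y) {a b : ℝ} (ha : 0 ≤ a) (hab : a < b) (hb : b ≤ 1) : Path x y :=
  γ.reparam (ramp a b) (continuous_ramp a b) (ramp_of_le hab ha) (ramp_of_ge hab hb)

variable (γ : Path x y) {a b : ℝ} (ha : 0 ≤ a) (hab : a < b) (hb : b ≤ 1)

theorem Path.squeeze_homotopic : (γ.squeeze ha hab hb).Homotopic γ :=
  ⟨(Path.Homotopy.reparam γ _ _ _ _).symm⟩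

theorem Path.range_squeeze : range (γ.squeeze ha hab hb) = range γ :=
  Path.range_reparam _ _ _ _

theorem Path.extend_squeeze_of_le {r : ℝ} (hr : r ≤ a) :
    (γ.squeeze ha hab hb).extend r = x := by
  rcases le_or_gt r 0 with hr0 | hr0
  · exact Path.extend_of_le_zero _ hr0
  · rw [Path.extend_apply _ ⟨hr0.le, by linarith⟩, Path.squeeze, Path.coe_reparam,
      Function.comp_apply, ramp_of_le hab hr, γ.source]

theorem Path.extend_squeeze_of_ge {r : ℝ} (hr : b ≤ r) :
    (γ.squeeze ha hab hb).extend r = y := by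
  rcases le_or_gt 1 r with hr1 | hr1
  · exact Path.extend_of_one_le _ hr1
  · rw [Path.extend_apply _ ⟨by linarith, hr1.le⟩, Path.squeeze, Path.coe_reparam,
      Function.comp_apply, ramp_of_ge hab hr, γ.target]

end Reparam

section Piece

variable {x y x' y' : X}

def Path.piece (γ : Path x y) (a b : ℝ) : C(I, X) :=
  ⟨fun s => γ.extend (a + (b - a) * s), by fun_prop⟩

theorem Path.piece_trans_trans (θ : Path x' x) (G : Path x y) (δ : Path y y') :
    ((θ.trans G).trans δ).piece (1 / 4) (1 / 2) = G.toContinuousMap := by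
  ext s
  have hs := s.2
  show ((θ.trans G).trans δ).extend _ = G s
  rw [Path.extend_trans_of_le_half _ _ (by linarith [hs.2]),
    Path.extend_trans_of_half_le _ _ (by linarith [hs.1])]
  convert G.extend_extends' s using 2
  ring

theorem Path.exists_homotopic_piece (γ : Path x y) {a b : ℝ} (ha : 0 ≤ a) (hab : a < b)
    (hb : b ≤ 1) (hγa : ∀ r ≤ a, γ.extend r = x) (hγb : ∀ r, b ≤ r → γ.extend r = y) :
    ∃ w : Path x y, w.toContinuousMap = γ.piece a b ∧ w.Homotopic γ := by
  let w : Path x y := ⟨γ.piece a b, by simp [piece, hγa], by simp [piece, hγb]⟩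
  refine ⟨w, rfl, ?_⟩
  convert (w.squeeze_homotopic ha hab hb).symm using 1
  ext v
  rw [← γ.extend_extends']
  show γ.extend v = γ.extend (a + (b - a) * ramp a b v)
  rcases le_or_gt (v : ℝ) a with hva | hva
  · rw [ramp_of_le hab hva, hγa _ hva]; simp [hγa]
  rcases le_or_gt b (v : ℝ) with hvb | hvb
  · rw [ramp_of_ge hab hvb, hγb _ hvb]; simp [hγb]
  · rw [coe_ramp_of_mem hab ⟨hva.le, hvb.le⟩]

end Piece

theorem exists_mem_nhds_forall_range_subset {Y : Type*} [TopologicalSpace Y] {x : X}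
    {s : Set C(Y, X)} (hx : ContinuousMap.const Y x ∈ s) {p : s → Prop}
    (h : ∀ᶠ f in 𝓝 ⟨_, hx⟩, p f) : ∃ A ∈ 𝓝 x, ∀ f : s, range f.1 ⊆ A → p f := by
  rw [nhds_subtype, eventually_comap] at h
  obtain ⟨⟨K, A⟩, ⟨-, hA⟩, hKA⟩ := ((𝓝 x).basis_sets.nhds_continuousMapConst).eventually_iff.1 h
  exact ⟨A, hA, fun f hf => hKA (fun s _ => hf ⟨s, rfl⟩) f rfl⟩

theorem exists_forall_piece_trans_trans_mem {x y : X} {G : Path x y} {W : Set C(I, X)}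
    (hW : W ∈ 𝓝 G.toContinuousMap) :
    ∃ u, 0 < u ∧ u ≤ 1 ∧ ∃ A ∈ 𝓝 x, ∃ B ∈ 𝓝 y, ∀ {x' y' : X} (θ : Path x' x) (δ : Path y y'),
      range θ ⊆ A → range δ ⊆ B → ((θ.trans G).trans δ).piece ((1 - u) / 4) ((1 + u) / 2) ∈ W := by
  let Θ := {θ : C(I, X) | θ 1 = x}
  let Δ := {δ : C(I, X) | δ 0 = y}
  let Ω : (p : Θ × Δ) → Path (p.1.1 0) (p.2.1 1) := fun p =>
    ((⟨p.1.1, rfl, p.1.2⟩ : Path (p.1.1 0) x).trans G).trans ⟨p.2.1, p.2.2, rfl⟩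
  have hΩ : Continuous ↿Ω :=
    Path.trans_continuous_family _ (Path.trans_continuous_family _
      (show Continuous fun q : (Θ × Δ) × I => q.1.1.1 q.2 by fun_prop) _
      (show Continuous fun q : (Θ × Δ) × I => G q.2 by fun_prop)) _
      (show Continuous fun q : (Θ × Δ) × I => q.1.2.1 q.2 by fun_prop)
  let Φ : ℝ × (Θ × Δ) → C(I, X) := fun q => (Ω q.2).piece ((1 - q.1) / 4) ((1 + q.1) / 2)
  have hΦ : Continuous Φ := by
    refine ContinuousMap.continuous_of_continuous_uncurry _ ?_
    have h : Continuous fun q : (ℝ × (Θ × Δ)) × I =>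
        (q.1.2, (1 - q.1.1) / 4 + ((1 + q.1.1) / 2 - (1 - q.1.1) / 4) * (q.2 : ℝ)) := by
      fun_prop
    exact ((Path.continuous_uncurry_extend_of_continuous_family Ω hΩ).comp h).congr fun q => rfl
  let p₀ : Θ × Δ := (⟨ContinuousMap.const I x, rfl⟩, ⟨ContinuousMap.const I y, rfl⟩)
  have hΦ₀ : Φ (0, p₀) = G.toContinuousMap := by
    show (Ω p₀).piece ((1 - 0) / 4) ((1 + 0) / 2) = _
    rw [sub_zero, add_zero]
    exact Path.piece_trans_trans _ _ _
  have hev : ∀ᶠ q in 𝓝 (0 : ℝ) ×ˢ (𝓝 p₀.1 ×ˢ 𝓝 p₀.2), Φ q ∈ W := by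
    rw [← nhds_prod_eq, ← nhds_prod_eq]
    exact hΦ.continuousAt.preimage_mem_nhds (hΦ₀ ▸ hW)
  obtain ⟨pu, hpu, pp, hpp, hΦW⟩ := eventually_prod_iff.1 hev
  obtain ⟨pθ, hpθ, pδ, hpδ, hpp'⟩ := eventually_prod_iff.1 hpp
  obtain ⟨u, hu, hu0, hu1⟩ :=
    ((hpu.filter_mono nhdsWithin_le_nhds).and (Ioc_mem_nhdsGT zero_lt_one)).exists
  obtain ⟨A, hA, hAθ⟩ := exists_mem_nhds_forall_range_subset _ hpθ
  obtain ⟨B, hB, hBδ⟩ := exists_mem_nhds_forall_range_subset _ hpδ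
  refine ⟨u, hu0, hu1, A, hA, B, hB, fun θ δ hθ hδ => ?_⟩
  convert hΦW hu (hpp' (hAθ ⟨θ.toContinuousMap, θ.target⟩ hθ)
    (hBδ ⟨δ.toContinuousMap, δ.source⟩ hδ)) using 1
  ext s
  rfl

theorem exists_homotopic_mem_of_mem_nhds {x y : X} {G : Path x y} {W : Set C(I, X)}
    (hW : W ∈ 𝓝 G.toContinuousMap) :
    ∃ A ∈ 𝓝 x, ∃ B ∈ 𝓝 y, ∀ {x' y' : X} (θ : Path x' x) (δ : Path y y'),
      range θ ⊆ A → range δ ⊆ B →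
        ∃ w : Path x' y', w.toContinuousMap ∈ W ∧ w.Homotopic ((θ.trans G).trans δ) := by
  obtain ⟨u, hu0, hu1, A, hA, B, hB, hW'⟩ := exists_forall_piece_trans_trans_mem hW
  refine ⟨A, hA, B, hB, fun θ δ hθ hδ => ?_⟩
  have hu0' : 0 ≤ 1 - u := by linarith
  have hu1' : 1 - u < 1 := by linarith
  let θ' := θ.squeeze hu0' hu1' le_rfl
  let δ' := δ.squeeze le_rfl hu0 hu1
  obtain ⟨w, hw, hwΩ⟩ := ((θ'.trans G).trans δ').exists_homotopic_piece
    (a := (1 - u) / 4) (b := (1 + u) / 2) (by linarith) (by linarith) (by linarith)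
    (fun r hr => by
      rw [Path.extend_trans_of_le_half _ _ (by linarith),
        Path.extend_trans_of_le_half _ _ (by linarith)]
      exact θ.extend_squeeze_of_le hu0' hu1' le_rfl (by linarith))
    (fun r hr => by
      rw [Path.extend_trans_of_half_le _ _ (by linarith)]
      exact δ.extend_squeeze_of_ge le_rfl hu0 hu1 (by linarith))
  refine ⟨w, hw ▸ hW' θ' δ' ?_ ?_, ?_⟩
  · exact (θ.range_squeeze hu0' hu1' le_rfl).trans_subset hθ
  · exact (δ.range_squeeze le_rfl hu0 hu1).trans_subset hδ
  · exact hwΩ.trans (((θ.squeeze_homotopic hu0' hu1' le_rfl).hcomp (.refl G)).hcomp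
      (δ.squeeze_homotopic le_rfl hu0 hu1))

/-- For a locally path connected, semilocally simply connected `X`, the
quotient map `q : P(X) → Π₁(X)` is an open map. -/
theorem stmt3 {X : Type*} [TopologicalSpace X] [LocallyPathConnectedSpace X]
    (hX : SemilocSimplyConnected X) :
    IsOpenMap (pq : C(I, X) → Pi1 X) := by
  intro W hW
  refine isOpen_coinduced.2 (isOpen_iff_mem_nhds.2 ?_)
  rintro f ⟨g, hgW, hgf⟩
  replace hgf : pRel g f := Quotient.exact hgf
  let G : Path (f 0) (f 1) :=
    (toPath g).cast (hgf.endpts (by simp)).symm (hgf.endpts (by simp)).symm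
  have hGf : G.Homotopic (toPath f) := hgf
  obtain ⟨A, hA, B, hB, hAB⟩ := exists_homotopic_mem_of_mem_nhds (G := G) (hW.mem_nhds hgW)
  filter_upwards [eventually_homotopic_trans_trans hX (toPath f) hA hB]
    with h ⟨θ, δ, hθ, hδ, hh⟩
  obtain ⟨w, hwW, hw⟩ := hAB θ δ hθ hδ
  exact ⟨w.toContinuousMap, hwW, Quotient.sound
    (hw.trans ((((Path.Homotopic.refl θ).hcomp hGf).hcomp (.refl δ)).trans hh.symm))⟩
end
end

section
/- Let G be a path connected, locally path connected and semilocally simply connected topological group with identity 1. Then the fundamental groupoid Π₁(G) with the CO' topology is isomorphic, as a topological groupoid, to the transformation groupoid H ⋉ G, where H = {a ∈ Π₁(G) : s(a) = 1} is the universal covering group (group law induced by pointwise multiplication of paths starting at 1) acting on G through the covering homomorphism p : H → G, p([γ]) = γ(1). Concretely, the map J : H × G → Π₁(G), ([γ],g) ↦ [γ·g], is a homeomorphism and is multiplicative: for all paths η, γ in G with η(0) = γ(0) = 1 and all g ∈ G, setting h = γ(1)·g, the concatenation of the path γ·g followed by the path η·h is path-homotopic to the path t ↦ η(t)·γ(t)·g;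 i.e. J([η⊗γ], g) equals the composite [η·h] ⧠-composed with [γ·g] in Π₁(G). -/
open unitInterval

noncomputable section

variable {X : Type*} [TopologicalSpace X]

/-!
Right translation by constant paths, `[γ] · g = [γ·g]`, is a continuous right action of `G` on
`Π₁(G)` for which the source map is equivariant, `s([γ]·g) = s([γ])·g`. Any such action
trivialises: `([γ], g) ↦ [γ]·g` has inverse `b ↦ (b·s(b)⁻¹, s(b))`. Continuity of the action on
`Π₁(G) × G` comes from the quotient map `P(G) → Π₁(G)` being open: the saturation of an open set
`W` is the union of its translates `W·k` by loops `k` null-homotopic rel endpoints.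
Multiplicativity is the interchange law for pointwise products of concatenations:
`η·β ≃ (η ⧠ 1)·(β(1) ⧠ β) = (η·β(1)) ⧠ β`.
-/

open MulOpposite

theorem pRel.mul {M : Type*} [TopologicalSpace M] [Mul M] [ContinuousMul M]
    {f f' g g' : C(I, M)} (hf : pRel f f') (hg : pRel g g') : pRel (f * g) (f' * g') :=
  let ⟨F⟩ := hf
  let ⟨K⟩ := hg
  ⟨(F.prod K).compContinuousMap ⟨fun p => p.1 * p.2, continuous_mul⟩⟩

-- The endpoint proofs are `const_apply` rather than `rfl`: a proof whose inferred type is not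
-- syntactically the required one makes `rw [concat_mul_concat]` fail its motive check.
theorem pRel_concat_const_left (γ : C(I, X)) :
    pRel (concat (ContinuousMap.const I (γ 1)) γ (ContinuousMap.const_apply _ _).symm) γ :=
  ⟨Path.Homotopy.transRefl (toPath γ)⟩

theorem pRel_concat_const_right (η : C(I, X)) :
    pRel (concat η (ContinuousMap.const I (η 0)) (ContinuousMap.const_apply _ _)) η :=
  ⟨Path.Homotopy.reflTrans (toPath η)⟩

theorem concat_mul_concat {M : Type*} [TopologicalSpace M] [Mul M] [ContinuousMul M]
    (α α' β β' : C(I, M)) (h : β 1 = α 0) (h' : β' 1 = α' 0) :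
    concat α β h * concat α' β' h' = concat (α * α') (β * β') (by simp [h, h']) := by
  ext t
  simp only [concat, ContinuousMap.mul_apply, Path.coe_toContinuousMap, Path.trans_apply,
    Path.cast_coe]
  split_ifs <;> rfl

theorem pRel_mul_concat {M : Type*} [TopologicalSpace M] [Monoid M] [ContinuousMul M]
    (η β : C(I, M)) (hη : η 0 = 1) :
    pRel (η * β) (concat (η * ContinuousMap.const I (β 1)) β (by simp [hη])) := by
  have units : pRel _ _ := ((pRel_concat_const_right η).mul (pRel_concat_const_left β)).symm
  rw [concat_mul_concat] at units
  convert units using 2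
  ext; simp [hη]

theorem continuous_srcMap : Continuous (srcMap : Pi1 X → X) :=
  continuous_quot_lift _ (continuous_eval_const 0)

def Homeomorph.fiberOneProdOfEquivariant {G P : Type*} [Group G] [TopologicalSpace G]
    [ContinuousInv G] [TopologicalSpace P] [MulAction Gᵐᵒᵖ P] [ContinuousSMul Gᵐᵒᵖ P]
    (s : P → G) (hs : Continuous s) (hs_smul : ∀ (g : G) (a : P), s (op g • a) = s a * g) :
    {a : P // s a = 1} × G ≃ₜ P where
  toFun p := op p.2 • p.1.1
  invFun b := (⟨op (s b)⁻¹ • b, by rw [hs_smul, mul_inv_cancel]⟩, s b)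
  left_inv := fun ⟨⟨a, ha⟩, g⟩ => by
    ext <;> simp [hs_smul, ha, smul_smul]
  right_inv b := by simp [smul_smul]
  continuous_toFun := by fun_prop
  continuous_invFun := by fun_prop

section TopologicalGroup

variable {G : Type*} [TopologicalSpace G] [Group G] [IsTopologicalGroup G]

theorem isOpenMap_pq : IsOpenMap (pq : C(I, G) → Pi1 G) := by
  intro W hW
  have saturation : pq ⁻¹' (pq '' W) = ⋃ (k : C(I, G)) (_ : pRel k 1), (· * k) ⁻¹' W := by
    ext α
    simp only [Set.mem_preimage, Set.mem_image, Set.mem_iUnion]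
    constructor
    · rintro ⟨w, hw, hwα⟩
      have : pRel (α⁻¹ * w) (α⁻¹ * α) :=
        pRel.mul (ContinuousMap.HomotopicRel.refl _) (Quotient.exact hwα)
      exact ⟨α⁻¹ * w, by simpa using this, by simpa using hw⟩
    · rintro ⟨k, hk, hαk⟩
      have : pRel (α * k) (α * 1) := pRel.mul (ContinuousMap.HomotopicRel.refl _) hk
      exact ⟨α * k, hαk, Quotient.sound (show pRel _ _ by simpa using this)⟩
  apply isQuotientMap_quotient_mk'.isOpen_preimage.mp
  change IsOpen (pq ⁻¹' _)
  rw [saturation]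
  exact isOpen_biUnion fun k _ => hW.preimage (continuous_mul_const k)

instance : MulAction Gᵐᵒᵖ (Pi1 G) where
  smul g := Quotient.map (· * ContinuousMap.const I g.unop)
    fun _ _ h => h.mul (ContinuousMap.HomotopicRel.refl _)
  one_smul a := by
    induction a using Quotient.ind
    exact congrArg pq (mul_one _)
  mul_smul g h a := by
    induction a using Quotient.ind
    exact congrArg pq (by ext; simp [mul_assoc])

instance : ContinuousSMul Gᵐᵒᵖ (Pi1 G) where
  continuous_smul := by
    have hq : Topology.IsQuotientMap (Prod.map id pq : Gᵐᵒᵖ × C(I, G) → Gᵐᵒᵖ × Pi1 G) :=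
      (IsOpenMap.id.prodMap isOpenMap_pq).isQuotientMap
        (continuous_id.prodMap continuous_quotient_mk')
        (Function.surjective_id.prodMap Quotient.mk_surjective)
    rw [hq.continuous_iff]
    exact continuous_quotient_mk'.comp (continuous_snd.mul
      (ContinuousMap.continuous_const'.comp (continuous_unop.comp continuous_fst)))

theorem srcMap_op_smul (g : G) (a : Pi1 G) : srcMap (op g • a) = srcMap a * g := by
  induction a using Quotient.ind
  rfl

end TopologicalGroup

/-- For a path connected, locally path connected, semilocally simply connected
topological group `G`, the fundamental groupoid `Π₁(G)` is isomorphic as a topological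
groupoid to the transformation groupoid `H ⋉ G`, where `H = {a ∈ Π₁(G) : s(a) = 1}` is the
universal covering group acting through `p([γ]) = γ(1)`. Concretely:
`J : H × G → Π₁(G)`, `([γ], g) ↦ [γ·g]`, is a homeomorphism, and it is multiplicative: for
paths `η, γ` starting at `1` and `g ∈ G`, with `h = γ(1)·g`, the concatenation traversing
`γ·g` first and then `η·h` is path-homotopic to `t ↦ η(t)·γ(t)·g`, i.e.
`J([η ⊗ γ], g)` is the groupoid composite `[η·h] ∘ [γ·g]`. -/
theorem stmt14 {G : Type*} [TopologicalSpace G] [Group G] [IsTopologicalGroup G] :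
    ∃ e : ({ a : Pi1 G // srcMap a = 1 } × G) ≃ₜ Pi1 G,
      (∀ (γ : C(I, G)) (hγ : srcMap (pq γ) = 1) (g : G),
        e (⟨pq γ, hγ⟩, g) = pq (γ * ContinuousMap.const I g)) ∧
      ∀ (η γ : C(I, G)) (hη : η 0 = 1) (hγ : γ 0 = 1) (g : G),
        e (⟨pq (η * γ), show (η * γ) 0 = 1 by simp [hη, hγ]⟩, g) =
          pq (concat (η * ContinuousMap.const I (γ 1 * g))
                (γ * ContinuousMap.const I g) (by simp [hη, mul_assoc])) := by
  refine ⟨.fiberOneProdOfEquivariant srcMap continuous_srcMap srcMap_op_smul,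
    fun γ _ g => rfl, fun η γ hη _ g => Quotient.sound ?_⟩
  change pRel (η * γ * ContinuousMap.const I g) _
  rw [mul_assoc]
  exact pRel_mul_concat η (γ * ContinuousMap.const I g) hη
end
end
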